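/- arXiv:1801.09850 — 2 statements merged into one kernel-verified Lean document; each statement's English description precedes it below -/
import Mathlib

section
/- Conversely, if {I_j : j ∈ K*} is a minimum set cover of {1,…,m}, then the vector x̂ defined by x̂_j = x̄_j for j ∈ K* and x̂_j = −∞ otherwise is a sparsest solution of A ⊠ x = b, i.e., it minimizes |supp(x)| among all solutions. -/
open scoped Classical
open Finset

/-- Max-plus matrix-vector product: `(A ⊠ x) i = max_j (A i j + x j)`. -/
noncomputable def mpMul {m n : ℕ} (A : Fin m → Fin n → EReal) (x : Fin n → EReal) :
    Fin m → EReal := fun i => ⨆ j, A i j + x j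

/-- Principal solution `x̄ j = min_i (b i − A i j)`. -/
noncomputable def principal {m n : ℕ} (A : Fin m → Fin n → EReal) (b : Fin m → ℝ) :
    Fin n → EReal := fun j => ⨅ i, (b i : EReal) - A i j

/-- Every row and every column of `A` has a finite entry. -/
def DoublyAstic {m n : ℕ} (A : Fin m → Fin n → EReal) : Prop :=
  (∀ i, ∃ j, A i j ≠ ⊥) ∧ (∀ j, ∃ i, A i j ≠ ⊥)

/-- All entries lie in ℝ_max = ℝ ∪ {−∞}, i.e. are not +∞. -/
def RmaxMat {m n : ℕ} (A : Fin m → Fin n → EReal) : Prop := ∀ i j, A i j ≠ ⊤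

def RmaxVec {n : ℕ} (x : Fin n → EReal) : Prop := ∀ j, x j ≠ ⊤

/-- Support: indices of finite (non-bottom) components. -/
def supp {n : ℕ} (x : Fin n → EReal) : Set (Fin n) := {j | x j ≠ ⊥}

/-- ℓ₁ residual error `Σ_i (b i − (A ⊠ x) i)` (nonnegative under the lateness constraint). -/
noncomputable def err1 {m n : ℕ} (A : Fin m → Fin n → EReal) (b : Fin m → ℝ)
    (x : Fin n → EReal) : EReal := ∑ i, ((b i : EReal) - mpMul A x i)

/-! The principal solution is the largest subsolution: `y ≤ x̄` iff `A ⊠ y ≤ b`. Hence `x̂ ≤ x̄`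
satisfies `A ⊠ x̂ ≤ b`, and the cover gives equality in every row. Conversely, if `A ⊠ x = b`
then in each row `i` the maximum is attained at some `j ∈ supp x`, where
`b i - A i j = x j ≤ x̄ j ≤ b i - A i j`; so `i ∈ I_j` and `supp x` is a cover, of size at least
`|K*| ≥ |supp x̂|`. -/

namespace EReal

lemma add_eq_coe_of_coe_sub_eq {a p : EReal} {b : ℝ} (h : (b : EReal) - a = p)
    (ha : a ≠ ⊤) (hp : p ≠ ⊤) : a + p = b := by
  induction a with
  | bot => exact absurd (by rw [← h, coe_sub_bot]) hp
  | top => exact absurd rfl ha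
  | coe a => rw [← h, add_comm, sub_add_cancel]

lemma coe_sub_eq_of_add_eq_coe {a x : EReal} {b : ℝ} (h : a + x = b) : (b : EReal) - a = x := by
  induction a with
  | bot => simp at h
  | top =>
    induction x with
    | bot => simp at h
    | top => simp at h
    | coe x => rw [top_add_coe] at h; exact absurd h (top_ne_coe _)
  | coe a => rw [← h, add_sub_cancel_left]

end EReal

/-- `K` covers all rows by the sets `I_j = {i | b i - A i j = principal A b j}`, `j ∈ K`. -/
def IsPrincipalCover {m n : ℕ} (A : Fin m → Fin n → EReal) (b : Fin m → ℝ)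
    (K : Finset (Fin n)) : Prop :=
  ∀ i, ∃ j ∈ K, (b i : EReal) - A i j = principal A b j

noncomputable def principalOn {m n : ℕ} (A : Fin m → Fin n → EReal) (b : Fin m → ℝ)
    (K : Finset (Fin n)) : Fin n → EReal :=
  fun j => if j ∈ K then principal A b j else ⊥

section

variable {m n : ℕ} {A : Fin m → Fin n → EReal} {b : Fin m → ℝ}

lemma le_principal_iff {j : Fin n} {y : EReal} : y ≤ principal A b j ↔ ∀ i, A i j + y ≤ b i := by
  simp only [principal, le_iInf_iff]
  refine forall_congr' fun i => ?_
  rw [EReal.le_sub_iff_add_le (.inr (EReal.coe_ne_bot _)) (.inr (EReal.coe_ne_top _)), add_comm]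

lemma add_principal_le (i : Fin m) (j : Fin n) : A i j + principal A b j ≤ b i :=
  le_principal_iff.1 le_rfl i

lemma principal_le_sub (i : Fin m) (j : Fin n) : principal A b j ≤ (b i : EReal) - A i j :=
  iInf_le _ i

lemma principal_ne_top {j : Fin n} (hj : ∃ i, A i j ≠ ⊥) : principal A b j ≠ ⊤ := by
  obtain ⟨i, hi⟩ := hj
  refine ne_top_of_le_ne_top ?_ (principal_le_sub i j)
  induction h : A i j with
  | bot => exact absurd h hi
  | top => simp
  | coe a => rw [← EReal.coe_sub]; exact EReal.coe_ne_top _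

lemma le_principal_of_mpMul_le {x : Fin n → EReal} (hx : ∀ i, mpMul A x i ≤ b i) (j : Fin n) :
    x j ≤ principal A b j :=
  le_principal_iff.2 fun i => (le_iSup (fun j => A i j + x j) j).trans (hx i)

lemma exists_add_eq_of_mpMul_eq {x : Fin n → EReal} {i : Fin m} (hx : mpMul A x i = b i) :
    ∃ j, A i j + x j = b i := by
  have : Nonempty (Fin n) := by
    by_contra hn
    rw [not_nonempty_iff] at hn
    simp [mpMul] at hx
  obtain ⟨j, hj⟩ := exists_eq_ciSup_of_finite (f := fun j => A i j + x j)
  exact ⟨j, hj.trans hx⟩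

lemma isPrincipalCover_supp {x : Fin n → EReal} (hx : ∀ i, mpMul A x i = b i) :
    IsPrincipalCover A b (supp x).toFinset := by
  intro i
  obtain ⟨j, hj⟩ := exists_add_eq_of_mpMul_eq (hx i)
  have hxj : x j ≠ ⊥ := fun h => by simp [h] at hj
  refine ⟨j, Set.mem_toFinset.2 hxj, le_antisymm ?_ (principal_le_sub i j)⟩
  rw [EReal.coe_sub_eq_of_add_eq_coe hj]
  exact le_principal_of_mpMul_le (fun i => (hx i).le) j

lemma mpMul_principalOn_le (K : Finset (Fin n)) (i : Fin m) : mpMul A (principalOn A b K) i ≤ b i :=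
  iSup_le fun j => by
    by_cases hj : j ∈ K
    · simpa [principalOn, hj] using add_principal_le i j
    · simp [principalOn, hj]

lemma mpMul_principalOn_eq (hA : RmaxMat A) (hcol : ∀ j, ∃ i, A i j ≠ ⊥) {K : Finset (Fin n)}
    (hK : IsPrincipalCover A b K) (i : Fin m) : mpMul A (principalOn A b K) i = b i := by
  refine le_antisymm (mpMul_principalOn_le K i) ?_
  obtain ⟨j, hjK, hj⟩ := hK i
  calc (b i : EReal) = A i j + principalOn A b K j := by
        rw [principalOn, if_pos hjK,
          EReal.add_eq_coe_of_coe_sub_eq hj (hA i j) (principal_ne_top (hcol j))]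
    _ ≤ mpMul A (principalOn A b K) i := le_iSup (fun j => A i j + principalOn A b K j) j

lemma ncard_supp_principalOn_le (K : Finset (Fin n)) :
    (supp (principalOn A b K)).ncard ≤ K.card := by
  rw [← Set.ncard_coe_finset K]
  refine Set.ncard_le_ncard (fun j hj => ?_) K.finite_toSet
  by_contra hjK
  exact hj (if_neg hjK)

end

theorem stmt7_general {m n : ℕ} (A : Fin m → Fin n → EReal) (b : Fin m → ℝ)
    (hA : RmaxMat A) (hastic : DoublyAstic A)
    (K : Finset (Fin n))
    (hcov : ∀ i, ∃ j ∈ K, (b i : EReal) - A i j = principal A b j)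
    (hmin : ∀ K' : Finset (Fin n),
      (∀ i, ∃ j ∈ K', (b i : EReal) - A i j = principal A b j) → K.card ≤ K'.card) :
    (∀ i, mpMul A (fun j => if j ∈ K then principal A b j else ⊥) i = (b i : EReal)) ∧
      ∀ x : Fin n → EReal, RmaxVec x → (∀ i, mpMul A x i = (b i : EReal)) →
        (supp (fun j => if j ∈ K then principal A b j else ⊥)).ncard ≤ (supp x).ncard := by
  refine ⟨mpMul_principalOn_eq hA hastic.2 hcov, fun x _ hx => ?_⟩
  calc (supp (principalOn A b K)).ncard ≤ K.card := ncard_supp_principalOn_le K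
    _ ≤ (supp x).toFinset.card := hmin _ (isPrincipalCover_supp hx)
    _ = (supp x).ncard := (Set.ncard_eq_toFinset_card' _).symm

/-- a minimum set cover yields a sparsest solution. -/
theorem stmt7 {m n : ℕ} (A : Fin m → Fin n → EReal) (b : Fin m → ℝ)
    (hA : RmaxMat A) (hastic : DoublyAstic A)
    (hsol : ∃ x0 : Fin n → EReal, RmaxVec x0 ∧ ∀ i, mpMul A x0 i = (b i : EReal))
    (K : Finset (Fin n))
    (hcov : ∀ i, ∃ j ∈ K, (b i : EReal) - A i j = principal A b j)
    (hmin : ∀ K' : Finset (Fin n),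
      (∀ i, ∃ j ∈ K', (b i : EReal) - A i j = principal A b j) → K.card ≤ K'.card) :
    (∀ i, mpMul A (fun j => if j ∈ K then principal A b j else ⊥) i = (b i : EReal)) ∧
      ∀ x : Fin n → EReal, RmaxVec x → (∀ i, mpMul A x i = (b i : EReal)) →
        (supp (fun j => if j ∈ K then principal A b j else ⊥)).ncard ≤ (supp x).ncard :=
  stmt7_general A b hA hastic K hcov hmin
end

section
/- Let M > ε ≥ 0 and define Â(M) by Â_{ij} = A_{ij} if A_{ij} ≠ −∞, and Â_{ij} = −M + b_i − x̄_j if A_{ij} = −∞. Then the principal solution computed from (Â(M), b) equals the principal solution x̄ computed from (A, b); consequently A ⊠ x ≤ b iff Â(M) ⊠ x ≤ b. -/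
open scoped Classical
open Finset

/-- The big-M modification of `A`: infinite entries replaced by `−M + b i − x̄ j`. -/
noncomputable def bigM {m n : ℕ} (A : Fin m → Fin n → EReal) (b : Fin m → ℝ) (M : ℝ) :
    Fin m → Fin n → EReal :=
  fun i j => if A i j = ⊥ then (b i : EReal) - (M : EReal) - principal A b j else A i j

lemma mpMul_le_iff_le_principal {m n : ℕ} (A : Fin m → Fin n → EReal) (b : Fin m → ℝ)
    (x : Fin n → EReal) :
    (∀ i, mpMul A x i ≤ (b i : EReal)) ↔ ∀ j, x j ≤ principal A b j := by
  simp only [mpMul, principal, iSup_le_iff, le_iInf_iff]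
  refine ⟨fun h j i => ?_, fun h i j => ?_⟩
  · rw [EReal.le_sub_iff_add_le (.inr (EReal.coe_ne_bot _)) (.inr (EReal.coe_ne_top _)),
      add_comm]
    exact h i j
  · rw [add_comm, ← EReal.le_sub_iff_add_le (.inr (EReal.coe_ne_bot _))
      (.inr (EReal.coe_ne_top _))]
    exact h j i

/-- Also true for `p = ±∞`, by EReal's convention `⊥ + ⊤ = ⊥`. -/
lemma EReal.le_coe_sub_coe_sub_coe_sub {c r : ℝ} (hr : 0 ≤ r) (p : EReal) :
    p ≤ (c : EReal) - ((c : EReal) - r - p) := by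
  induction p using EReal.rec with
  | bot => exact bot_le
  | top => simp [EReal.sub_top]
  | coe p =>
    rw [← EReal.coe_sub, ← EReal.coe_sub, ← EReal.coe_sub, EReal.coe_le_coe_iff]
    linarith

/-- A replaced entry contributes `b i - (b i - M - x̄ j) = M + x̄ j ≥ x̄ j` to the minimum. -/
lemma principal_bigM {m n : ℕ} (A : Fin m → Fin n → EReal) (b : Fin m → ℝ) {M : ℝ}
    (hM : 0 ≤ M) : principal (bigM A b M) b = principal A b := by
  funext j
  refine le_antisymm (iInf_mono fun i => ?_) (le_iInf fun i => ?_)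
  · by_cases h : A i j = ⊥ <;> simp [bigM, h, EReal.sub_bot]
  · by_cases h : A i j = ⊥
    · simpa [bigM, h] using EReal.le_coe_sub_coe_sub_coe_sub hM (principal A b j)
    · simp only [bigM, h, if_false]
      exact iInf_le _ i

theorem stmt14_general {m n : ℕ} (A : Fin m → Fin n → EReal) (b : Fin m → ℝ) (ε M : ℝ)
    (hε : 0 ≤ ε) (hM : ε < M) :
    principal (bigM A b M) b = principal A b ∧
      ∀ x : Fin n → EReal, RmaxVec x →
        ((∀ i, mpMul A x i ≤ (b i : EReal)) ↔
          (∀ i, mpMul (bigM A b M) x i ≤ (b i : EReal))) := by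
  have hprincipal := principal_bigM A b (hε.trans hM.le)
  refine ⟨hprincipal, fun x _ => ?_⟩
  rw [mpMul_le_iff_le_principal, mpMul_le_iff_le_principal, hprincipal]

/-- the big-M matrix has the same principal solution as `A`; hence the
lateness constraints agree. -/
theorem stmt14 {m n : ℕ} (A : Fin m → Fin n → EReal) (b : Fin m → ℝ) (ε M : ℝ)
    (hε : 0 ≤ ε) (hM : ε < M) (hA : RmaxMat A) (hastic : DoublyAstic A) :
    principal (bigM A b M) b = principal A b ∧
      ∀ x : Fin n → EReal, RmaxVec x →
        ((∀ i, mpMul A x i ≤ (b i : EReal)) ↔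
          (∀ i, mpMul (bigM A b M) x i ≤ (b i : EReal))) :=
  stmt14_general A b ε M hε hM
end
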